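/- For a positive definite real symmetric m×m matrix g, a real symmetric m×m matrix h, and complex α, β with Re(α) > (m+1)/2 − 1 and Re(β) > m, the function η*_m(g,h;α,β) := det(g)^{α+β−(m+1)/2} · ∫_{x∈V_m, x±h>0} e^{−tr(gx)} det(x+h)^{α−(m+1)/2} det(x−h)^{β−(m+1)/2} dx satisfies η*_m(g[a], h[ᵗa^{-1}]; α, β) = η*_m(g, h; α, β) for all a ∈ GL_m(ℝ). -/

import Mathlib

/-!
The substitution `x = a y aᵀ` on symmetric matrices has Jacobian `|det a| ^ (m + 1)`, maps the
domain `y ± a⁻¹ h (aᵀ)⁻¹ > 0` onto `x ± h > 0`, turns `tr (g x)` into `tr (aᵀ g a y)` and multiplies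
both determinants `det (x ± h)` by `det a ^ 2`; these factors cancel exactly against
`det (aᵀ g a) ^ (α + β - κ) = (det a ^ 2) ^ (α + β - κ) det g ^ (α + β - κ)`.

The Jacobian `det (x ↦ a x aᵀ) = det a ^ (m + 1)` is checked on generators of `M_m(ℝ)`: for a
diagonal matrix it is a count of exponents, and for a transvection `T` the value `δ T` satisfies
`δ T = (δ T) ^ 2`, because conjugation by `diag (2, 1, …, 1)` turns `T` into `T ^ 2`.
-/

open Complex Real Matrix MeasureTheory

variable (m : ℕ)

/-- Build a symmetric matrix from its upper-triangular coordinates. -/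
def symOfCoords (f : {p : Fin m × Fin m // p.1 ≤ p.2} → ℝ) : Matrix (Fin m) (Fin m) ℝ :=
  fun i j => if h : i ≤ j then f ⟨(i, j), h⟩ else f ⟨(j, i), (not_le.mp h).le⟩

/-- The confluent hypergeometric function
`η*_m(g,h;α,β) = det(g)^{α+β−κ(m)} ∫_{x±h>0} e^{−tr(gx)} det(x+h)^{α−κ(m)} det(x−h)^{β−κ(m)} dx`,
the integral taken over the coordinates `x_{ij}`, `i ≤ j`, of real symmetric matrices `x`. -/
noncomputable def etaStar (g h : Matrix (Fin m) (Fin m) ℝ) (α β : ℂ) : ℂ :=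
  (g.det : ℂ) ^ (α + β - ((m : ℂ) + 1) / 2) *
    ∫ f : {p : Fin m × Fin m // p.1 ≤ p.2} → ℝ,
      Set.indicator {f | (symOfCoords m f + h).PosDef ∧ (symOfCoords m f - h).PosDef}
        (fun f => (Real.exp (-(g * symOfCoords m f).trace) : ℂ) *
          ((((symOfCoords m f + h).det : ℝ) : ℂ) ^ (α - ((m : ℂ) + 1) / 2)) *
          ((((symOfCoords m f - h).det : ℝ) : ℂ) ^ (β - ((m : ℂ) + 1) / 2))) f

theorem integral_comp_linearMap {E F : Type*} [NormedAddCommGroup E] [NormedSpace ℝ E]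
    [MeasurableSpace E] [BorelSpace E] [FiniteDimensional ℝ E] (μ : Measure E)
    [μ.IsAddHaarMeasure] [NormedAddCommGroup F] [NormedSpace ℝ F] {L : E →ₗ[ℝ] E}
    (hL : LinearMap.det L ≠ 0) (φ : E → F) :
    ∫ x, φ (L x) ∂μ = |(LinearMap.det L)⁻¹| • ∫ x, φ x ∂μ := by
  let e := (L.equivOfDetNeZero hL).toContinuousLinearEquiv.toHomeomorph.toMeasurableEquiv
  have := integral_map_equiv (μ := μ) e φ
  rwa [show ⇑e = ⇑L from rfl, Measure.map_linearMap_addHaar_eq_smul_addHaar μ hL,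
    integral_smul_measure, ENNReal.toReal_ofReal (abs_nonneg _), eq_comm] at this

theorem Matrix.IsSymm.mul_mul_transpose {n R : Type*} [Fintype n] [CommSemiring R]
    {X : Matrix n n R} (hX : X.IsSymm) (c : Matrix n n R) : (c * X * cᵀ).IsSymm := by
  simp [Matrix.IsSymm, transpose_mul, hX.eq, Matrix.mul_assoc]

theorem ofReal_sq_cpow_natCast_div_two (x : ℝ) (n : ℕ) :
    ((x ^ 2 : ℝ) : ℂ) ^ ((n : ℂ) / 2) = ((|x| ^ n : ℝ) : ℂ) := by
  rw [← sq_abs, show (n : ℂ) / 2 = ((n / 2 : ℝ) : ℂ) by push_cast; ring,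
    ← ofReal_cpow (sq_nonneg _), ← Real.rpow_natCast |x| 2, ← Real.rpow_mul (abs_nonneg x),
    show ((2 : ℕ) : ℝ) * (n / 2) = n by push_cast; ring, Real.rpow_natCast]

abbrev UpperPairs (m : ℕ) := {p : Fin m × Fin m // p.1 ≤ p.2}

section Coordinates

variable {m}

def coordsOf (X : Matrix (Fin m) (Fin m) ℝ) : UpperPairs m → ℝ := fun q => X q.1.1 q.1.2

theorem symOfCoords_isSymm (f : UpperPairs m → ℝ) : (symOfCoords m f).IsSymm := by
  ext i j
  simp only [transpose_apply, symOfCoords]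
  rcases lt_trichotomy i j with hij | rfl | hij
  · rw [dif_neg hij.not_ge, dif_pos hij.le]
  · rfl
  · rw [dif_pos hij.le, dif_neg hij.not_ge]

theorem symOfCoords_coordsOf {X : Matrix (Fin m) (Fin m) ℝ} (hX : X.IsSymm) :
    symOfCoords m (coordsOf X) = X := by
  ext i j
  simp only [symOfCoords, coordsOf]
  split
  · rfl
  · exact hX.apply i j

theorem symOfCoords_apply_coe (f : UpperPairs m → ℝ) (q : UpperPairs m) :
    symOfCoords m f q.1.1 q.1.2 = f q := by
  simp [symOfCoords, q.2]

theorem coordsOf_symOfCoords (f : UpperPairs m → ℝ) : coordsOf (symOfCoords m f) = f :=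
  funext (symOfCoords_apply_coe f)

theorem symOfCoords_add (f f' : UpperPairs m → ℝ) :
    symOfCoords m (f + f') = symOfCoords m f + symOfCoords m f' := by
  ext i j; simp only [symOfCoords, Pi.add_apply, Matrix.add_apply]; split <;> rfl

theorem symOfCoords_smul (r : ℝ) (f : UpperPairs m → ℝ) :
    symOfCoords m (r • f) = r • symOfCoords m f := by
  ext i j; simp only [symOfCoords, Pi.smul_apply, Matrix.smul_apply]; split <;> rfl

def conjCoords : Matrix (Fin m) (Fin m) ℝ →* Module.End ℝ (UpperPairs m → ℝ) where
  toFun c :=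
    { toFun := fun f => coordsOf (c * symOfCoords m f * cᵀ)
      map_add' := fun f f' => by
        ext q; simp [symOfCoords_add, Matrix.mul_add, Matrix.add_mul, coordsOf]
      map_smul' := fun r f => by ext q; simp [symOfCoords_smul, coordsOf] }
  map_one' := LinearMap.ext fun f => by simp [coordsOf_symOfCoords]
  map_mul' b c := LinearMap.ext fun f => by
    change coordsOf (b * c * symOfCoords m f * (b * c)ᵀ) =
      coordsOf (b * symOfCoords m (coordsOf (c * symOfCoords m f * cᵀ)) * bᵀ)
    rw [symOfCoords_coordsOf ((symOfCoords_isSymm f).mul_mul_transpose c), transpose_mul]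
    simp only [Matrix.mul_assoc]

theorem symOfCoords_conjCoords (c : Matrix (Fin m) (Fin m) ℝ) (f : UpperPairs m → ℝ) :
    symOfCoords m (conjCoords c f) = c * symOfCoords m f * cᵀ :=
  symOfCoords_coordsOf ((symOfCoords_isSymm f).mul_mul_transpose c)

end Coordinates

section Determinant

variable {m}

theorem prod_upperPairs {M : Type*} [CommMonoid M] (F : Fin m → Fin m → M) :
    ∏ q : UpperPairs m, F q.1.1 q.1.2 = ∏ i, ∏ j, if i ≤ j then F i j else 1 := by
  rw [← Fintype.prod_prod_type', ← Finset.prod_filter]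
  exact (Finset.prod_subtype _ (fun p => by simp) (fun p : Fin m × Fin m => F p.1 p.2)).symm

theorem prod_upperPairs_mul {M : Type*} [CommMonoid M] (t : Fin m → M) :
    ∏ q : UpperPairs m, t q.1.1 * t q.1.2 = (∏ i, t i) ^ (m + 1) := by
  have hfst : ∏ q : UpperPairs m, t q.1.1 = ∏ i, t i ^ (m - i) := by
    rw [prod_upperPairs (fun i _ => t i)]
    refine Finset.prod_congr rfl fun i _ => ?_
    rw [← Finset.prod_filter, Finset.prod_const, Finset.filter_le_eq_Ici, Fin.card_Ici]
  have hsnd : ∏ q : UpperPairs m, t q.1.2 = ∏ i, t i ^ (i + 1 : ℕ) := by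
    rw [prod_upperPairs (fun _ j => t j), Finset.prod_comm]
    refine Finset.prod_congr rfl fun j _ => ?_
    rw [← Finset.prod_filter, Finset.prod_const, Finset.filter_ge_eq_Iic, Fin.card_Iic]
  rw [Finset.prod_mul_distrib, hfst, hsnd, ← Finset.prod_mul_distrib, ← Finset.prod_pow]
  refine Finset.prod_congr rfl fun i _ => ?_
  rw [← pow_add]
  congr 1
  omega

theorem det_conjCoords_diagonal (t : Fin m → ℝ) :
    LinearMap.det (conjCoords (diagonal t)) = (diagonal t).det ^ (m + 1) := by
  have hdiag : conjCoords (diagonal t) =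
      toLin' (diagonal fun q : UpperPairs m => t q.1.1 * t q.1.2) := by
    refine LinearMap.ext fun f => funext fun q => ?_
    rw [toLin'_apply, mulVec_diagonal, ← symOfCoords_apply_coe f q]
    simp only [conjCoords, MonoidHom.coe_mk, OneHom.coe_mk, LinearMap.coe_mk, AddHom.coe_mk,
      coordsOf, diagonal_transpose, mul_diagonal, diagonal_mul]
    ring
  rw [hdiag, LinearMap.det_toLin', det_diagonal, det_diagonal, prod_upperPairs_mul]

theorem isUnit_det_conjCoords {c : Matrix (Fin m) (Fin m) ℝ} (hc : IsUnit c) :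
    IsUnit (LinearMap.det (conjCoords c)) :=
  (hc.map conjCoords).map LinearMap.det

theorem det_conjCoords_transvection {i j : Fin m} (hij : i ≠ j) (u : ℝ) :
    LinearMap.det (conjCoords (transvection i j u)) = 1 := by
  set δ : Matrix (Fin m) (Fin m) ℝ →* ℝ := LinearMap.det.comp conjCoords
  set D : Matrix (Fin m) (Fin m) ℝ := diagonal (Function.update 1 i 2)
  have hconj : D * transvection i j u = transvection i j u * transvection i j u * D := by
    rw [transvection_mul_transvection_same i j hij]
    ext a b
    simp only [D, transvection, diagonal_mul, mul_diagonal, Matrix.add_apply, one_apply,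
      single_apply, Function.update_apply, Pi.one_apply]
    split_ifs <;> grind
  have hD : IsUnit (δ D) := isUnit_det_conjCoords
    ((isUnit_iff_isUnit_det _).2 (by simp [D, det_diagonal, Finset.prod_update_of_mem]))
  have hT : IsUnit (δ (transvection i j u)) :=
    isUnit_det_conjCoords ((isUnit_iff_isUnit_det _).2 (by simp [det_transvection_of_ne _ _ hij]))
  have hδ := congrArg δ hconj
  simp only [map_mul] at hδ
  have hsq : δ (transvection i j u) * δ (transvection i j u) = δ (transvection i j u) * 1 :=
    mul_left_cancel₀ hD.ne_zero (by rw [mul_one, hδ]; ring)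
  exact mul_left_cancel₀ hT.ne_zero hsq

theorem det_conjCoords (c : Matrix (Fin m) (Fin m) ℝ) :
    LinearMap.det (conjCoords c) = c.det ^ (m + 1) := by
  induction c using diagonal_transvection_induction with
  | hdiag t _ => exact det_conjCoords_diagonal t
  | htransvec t => rw [t.det, one_pow]; exact det_conjCoords_transvection t.hij t.c
  | hmul A B hA hB => rw [map_mul, map_mul, hA, hB, det_mul, mul_pow]

end Determinant

section Integrand

variable {m}

def etaDomain (h : Matrix (Fin m) (Fin m) ℝ) : Set (Matrix (Fin m) (Fin m) ℝ) :=
  {x | (x + h).PosDef ∧ (x - h).PosDef}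

noncomputable def etaIntegrand (g h : Matrix (Fin m) (Fin m) ℝ) (α β : ℂ)
    (x : Matrix (Fin m) (Fin m) ℝ) : ℂ :=
  (etaDomain h).indicator
    (fun x => (Real.exp (-(g * x).trace) : ℂ) *
      ((((x + h).det : ℝ) : ℂ) ^ (α - ((m : ℂ) + 1) / 2)) *
      ((((x - h).det : ℝ) : ℂ) ^ (β - ((m : ℂ) + 1) / 2))) x

theorem etaStar_eq_integral_etaIntegrand (g h : Matrix (Fin m) (Fin m) ℝ) (α β : ℂ) :
    etaStar m g h α β = (g.det : ℂ) ^ (α + β - ((m : ℂ) + 1) / 2) *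
      ∫ f, etaIntegrand g h α β (symOfCoords m f) :=
  rfl

theorem mem_etaDomain_conj {a : Matrix (Fin m) (Fin m) ℝ} (ha : IsUnit a)
    {h x : Matrix (Fin m) (Fin m) ℝ} : a * x * aᵀ ∈ etaDomain (a * h * aᵀ) ↔ x ∈ etaDomain h := by
  have hposDef (y : Matrix (Fin m) (Fin m) ℝ) : (a * y * aᵀ).PosDef ↔ y.PosDef := by
    rw [← conjTranspose_eq_transpose_of_trivial, ← star_eq_conjTranspose]
    exact ha.posDef_star_right_conjugate_iff
  simp only [etaDomain, Set.mem_ofPred_eq, ← hposDef (x + h), ← hposDef (x - h)]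
  rw [Matrix.mul_add, Matrix.add_mul, Matrix.mul_sub, Matrix.sub_mul]

theorem etaIntegrand_conj {a : Matrix (Fin m) (Fin m) ℝ} (ha : IsUnit a)
    (g h x : Matrix (Fin m) (Fin m) ℝ) (α β : ℂ) :
    etaIntegrand g (a * h * aᵀ) α β (a * x * aᵀ) =
      ((a.det ^ 2 : ℝ) : ℂ) ^ (α - ((m : ℂ) + 1) / 2) *
        ((a.det ^ 2 : ℝ) : ℂ) ^ (β - ((m : ℂ) + 1) / 2) * etaIntegrand (aᵀ * g * a) h α β x := by
  by_cases hx : x ∈ etaDomain h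
  · have hplus : a * x * aᵀ + a * h * aᵀ = a * (x + h) * aᵀ := by noncomm_ring
    have hminus : a * x * aᵀ - a * h * aᵀ = a * (x - h) * aᵀ := by noncomm_ring
    have hdet (y : Matrix (Fin m) (Fin m) ℝ) : (a * y * aᵀ).det = a.det ^ 2 * y.det := by
      rw [det_mul, det_mul, det_transpose]; ring
    have htrace : (g * (a * x * aᵀ)).trace = (aᵀ * g * a * x).trace := by
      rw [← Matrix.mul_assoc, trace_mul_comm, ← Matrix.mul_assoc, ← Matrix.mul_assoc]
    rw [etaIntegrand, etaIntegrand, Set.indicator_of_mem ((mem_etaDomain_conj ha).2 hx),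
      Set.indicator_of_mem hx, hplus, hminus, hdet, hdet, htrace, ofReal_mul, ofReal_mul,
      mul_cpow_ofReal_nonneg (sq_nonneg _) hx.1.det_pos.le,
      mul_cpow_ofReal_nonneg (sq_nonneg _) hx.2.det_pos.le]
    ring
  · rw [etaIntegrand, etaIntegrand, Set.indicator_of_notMem (mt (mem_etaDomain_conj ha).1 hx),
      Set.indicator_of_notMem hx, mul_zero]

theorem integral_etaIntegrand_conj {a : Matrix (Fin m) (Fin m) ℝ} (ha : IsUnit a)
    (g h : Matrix (Fin m) (Fin m) ℝ) (α β : ℂ) :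
    ∫ f, etaIntegrand g (a * h * aᵀ) α β (symOfCoords m f) =
      ((|a.det| ^ (m + 1) : ℝ) : ℂ) * (((a.det ^ 2 : ℝ) : ℂ) ^ (α - ((m : ℂ) + 1) / 2) *
        ((a.det ^ 2 : ℝ) : ℂ) ^ (β - ((m : ℂ) + 1) / 2)) *
        ∫ f, etaIntegrand (aᵀ * g * a) h α β (symOfCoords m f) := by
  have hL := (isUnit_det_conjCoords ha).ne_zero
  have hsubst := integral_comp_linearMap volume hL
    fun f => etaIntegrand g (a * h * aᵀ) α β (symOfCoords m f)
  simp only [symOfCoords_conjCoords, etaIntegrand_conj ha, integral_const_mul,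
    det_conjCoords] at hsubst
  have hdet : |a.det| ^ (m + 1) ≠ 0 :=
    pow_ne_zero _ (abs_ne_zero.2 ((isUnit_iff_isUnit_det a).1 ha).ne_zero)
  conv_rhs => rw [mul_assoc, hsubst]
  rw [abs_inv, abs_pow, real_smul, ← mul_assoc, ← ofReal_mul, mul_inv_cancel₀ hdet, ofReal_one,
    one_mul]

end Integrand

theorem etaStar_invariance (g h : Matrix (Fin m) (Fin m) ℝ) (hg : g.PosDef)
    (α β : ℂ) (a : Matrix (Fin m) (Fin m) ℝ) (ha : IsUnit a.det) :
    etaStar m (aᵀ * g * a) (a⁻¹ * h * (aᵀ)⁻¹) α β = etaStar m g h α β := by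
  have hh : h = a * (a⁻¹ * h * (aᵀ)⁻¹) * aᵀ := by
    rw [← Matrix.mul_assoc, ← Matrix.mul_assoc, mul_nonsing_inv _ ha, Matrix.one_mul,
      Matrix.mul_assoc, nonsing_inv_mul _ (by rwa [det_transpose]), Matrix.mul_one]
  have hdet : (aᵀ * g * a).det = a.det ^ 2 * g.det := by
    rw [det_mul, det_mul, det_transpose]; ring
  have hr : ((a.det ^ 2 : ℝ) : ℂ) ≠ 0 := by exact_mod_cast pow_ne_zero 2 ha.ne_zero
  have hsplit : ((a.det ^ 2 : ℝ) : ℂ) ^ (α + β - ((m : ℂ) + 1) / 2) =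
      ((|a.det| ^ (m + 1) : ℝ) : ℂ) * (((a.det ^ 2 : ℝ) : ℂ) ^ (α - ((m : ℂ) + 1) / 2) *
        ((a.det ^ 2 : ℝ) : ℂ) ^ (β - ((m : ℂ) + 1) / 2)) := by
    rw [← ofReal_sq_cpow_natCast_div_two, ← cpow_add _ _ hr, ← cpow_add _ _ hr]
    congr 1; push_cast; ring
  conv_rhs => rw [etaStar_eq_integral_etaIntegrand, hh,
    integral_etaIntegrand_conj ((isUnit_iff_isUnit_det a).2 ha)]
  rw [etaStar_eq_integral_etaIntegrand, hdet, ofReal_mul,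
    mul_cpow_ofReal_nonneg (sq_nonneg _) hg.det_pos.le, hsplit]
  ring
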